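/- Let T be the 4×4 matrix over ℂ[λ₄,λ₆,λ₈,λ₁₀] with rows (4λ₄, 6λ₆, 8λ₈, 10λ₁₀), (6λ₆, 8λ₈ − (12/5)λ₄², 10λ₁₀ − (8/5)λ₄λ₆, −(4/5)λ₄λ₈), (8λ₈, 10λ₁₀ − (8/5)λ₄λ₆, 4λ₄λ₈ − (12/5)λ₆², 6λ₄λ₁₀ − (6/5)λ₆λ₈), (10λ₁₀, −(4/5)λ₄λ₈, 6λ₄λ₁₀ − (6/5)λ₆λ₈, 4λ₆λ₁₀ − (8/5)λ₈²), and define the derivations ℓ₀, ℓ₂, ℓ₄, ℓ₆ of ℂ[λ₄,λ₆,λ₈,λ₁₀] by (ℓ₀, ℓ₂, ℓ₄, ℓ₆)ᵀ = T·(∂/∂λ₄, ∂/∂λ₆, ∂/∂λ₈, ∂/∂λ₁₀)ᵀ. Set Δ = (16/5)·det T. Then Δ is a homogeneous polynomial of degree 40 with respect to the grading deg λⱼ = j, and ℓ₀Δ = 40Δ, ℓ₂Δ = 0, ℓ₄Δ = 12λ₄Δ, ℓ₆Δ = 4λ₆Δ; in particular the fields ℓ₀, ℓ₂, ℓ₄,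 ℓ₆ are tangent to the hypersurface {Δ = 0}. -/

import Mathlib

open MvPolynomial

noncomputable section

/-- The polynomial ring ℂ[λ₄,λ₆,λ₈,λ₁₀];
`X 0 = λ₄`, `X 1 = λ₆`, `X 2 = λ₈`, `X 3 = λ₁₀`. -/
abbrev R4 : Type := MvPolynomial (Fin 4) ℂ

def l4 : R4 := X 0
def l6 : R4 := X 1
def l8 : R4 := X 2
def l10 : R4 := X 3

/-- The matrix `T`. -/
def T : Matrix (Fin 4) (Fin 4) R4 :=
  !![4 * l4, 6 * l6, 8 * l8, 10 * l10;
     6 * l6, 8 * l8 - C (12/5 : ℂ) * l4 ^ 2, 10 * l10 - C (8/5 : ℂ) * l4 * l6,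
       -(C (4/5 : ℂ)) * l4 * l8;
     8 * l8, 10 * l10 - C (8/5 : ℂ) * l4 * l6, 4 * l4 * l8 - C (12/5 : ℂ) * l6 ^ 2,
       6 * l4 * l10 - C (6/5 : ℂ) * l6 * l8;
     10 * l10, -(C (4/5 : ℂ)) * l4 * l8, 6 * l4 * l10 - C (6/5 : ℂ) * l6 * l8,
       4 * l6 * l10 - C (8/5 : ℂ) * l8 ^ 2]

/-- The derivations `ℓ₀, ℓ₂, ℓ₄, ℓ₆`: `ℓᵢ = ∑ⱼ Tᵢⱼ ∂/∂λⱼ` (rows `i = 0,1,2,3`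
correspond to `ℓ₀, ℓ₂, ℓ₄, ℓ₆`). -/
def ell (i : Fin 4) (P : R4) : R4 := ∑ j : Fin 4, T i j * pderiv j P

/-- Δ = (16/5)·det T -/
def Δ : R4 := C (16/5 : ℂ) * T.det

/-- The grading `deg λ₄ = 4`, `deg λ₆ = 6`, `deg λ₈ = 8`, `deg λ₁₀ = 10`. -/
def w : Fin 4 → ℕ := ![4, 6, 8, 10]

/-!
Each entry `T i j` is weighted homogeneous of degree `(w i - 4) + w j`, so every term of the
Leibniz expansion of `det T` has degree `∑ (w i - 4) + ∑ w j = 12 + 28 = 40`. The first row of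
`T` is `(w j λⱼ)ⱼ`, so `ℓ₀` is the weighted Euler field and `ℓ₀Δ = 40Δ` is Euler's identity.
The other three identities are a direct computation with the explicit expansion of `Δ`.
-/

@[simp]
theorem Derivation.map_ofNat {R A M : Type*} [CommSemiring R] [CommSemiring A]
    [AddCommMonoid M] [Algebra R A] [Module A M] [Module R M] (D : Derivation R A M) (n : ℕ)
    [n.AtLeastTwo] : D (ofNat(n) : A) = 0 :=
  D.map_natCast n

namespace MvPolynomial

variable {σ R M : Type*} [CommSemiring R] [AddCommMonoid M]

theorem isWeightedHomogeneous_ofNat (w : σ → M) (n : ℕ) [n.AtLeastTwo] :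
    (ofNat(n) : MvPolynomial σ R).IsWeightedHomogeneous w 0 := by
  rw [← map_ofNat C]
  exact isWeightedHomogeneous_C w _

theorem IsWeightedHomogeneous.mul_of_add_eq {w : σ → M} {φ ψ : MvPolynomial σ R} {m n k : M}
    (hφ : φ.IsWeightedHomogeneous w m) (hψ : ψ.IsWeightedHomogeneous w n) (h : m + n = k) :
    (φ * ψ).IsWeightedHomogeneous w k :=
  h ▸ hφ.mul hψ

end MvPolynomial

theorem Matrix.isWeightedHomogeneous_det {σ n R M : Type*} [CommRing R] [Fintype n]
    [DecidableEq n] [AddCommMonoid M] {w : σ → M} {A : Matrix n n (MvPolynomial σ R)}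
    {a b : n → M} (h : ∀ i j, (A i j).IsWeightedHomogeneous w (a i + b j)) :
    A.det.IsWeightedHomogeneous w (∑ i, a i + ∑ j, b j) := by
  rw [Matrix.det_apply]
  refine IsWeightedHomogeneous.sum _ _ _ fun e _ => ?_
  have hprod := IsWeightedHomogeneous.prod Finset.univ _ _ fun i _ => h (e i) i
  rw [Finset.sum_add_distrib, Equiv.sum_comp] at hprod
  rw [Units.smul_def]
  exact zsmul_mem (show _ ∈ weightedHomogeneousSubmodule R w _ from hprod) _

theorem isWeightedHomogeneous_T_apply (i j : Fin 4) :
    (T i j).IsWeightedHomogeneous w (![0, 2, 4, 6] i + w j) := by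
  have h4 : l4.IsWeightedHomogeneous w 4 := isWeightedHomogeneous_X ℂ w 0
  have h6 : l6.IsWeightedHomogeneous w 6 := isWeightedHomogeneous_X ℂ w 1
  have h8 : l8.IsWeightedHomogeneous w 8 := isWeightedHomogeneous_X ℂ w 2
  have h10 : l10.IsWeightedHomogeneous w 10 := isWeightedHomogeneous_X ℂ w 3
  fin_cases i <;> fin_cases j <;>
    simp only [T, w, Matrix.of_apply, Matrix.cons_val', Matrix.cons_val_fin_one] <;>
    apply_rules [IsWeightedHomogeneous.mul_of_add_eq, IsWeightedHomogeneous.sub,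
      IsWeightedHomogeneous.neg, IsWeightedHomogeneous.pow, isWeightedHomogeneous_C,
      isWeightedHomogeneous_ofNat]

theorem isWeightedHomogeneous_Δ : Δ.IsWeightedHomogeneous w 40 :=
  (Matrix.isWeightedHomogeneous_det isWeightedHomogeneous_T_apply).C_mul _

theorem T_zero_apply (j : Fin 4) : T 0 j = (w j : R4) * X j := by
  fin_cases j <;> simp [T, w, l4, l6, l8, l10]

theorem ell_zero (P : R4) : ell 0 P = ∑ j, w j • (X j * pderiv j P) := by
  simp only [ell, T_zero_apply, nsmul_eq_mul, mul_assoc]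

theorem ell_zero_Δ : ell 0 Δ = 40 * Δ := by
  rw [ell_zero, isWeightedHomogeneous_Δ.sum_weight_X_mul_pderiv, nsmul_eq_mul, Nat.cast_ofNat]

theorem ell_C_mul (i : Fin 4) (c : ℂ) (P : R4) : ell i (C c * P) = C c * ell i P := by
  simp only [ell, pderiv_C_mul, Finset.mul_sum, mul_left_comm]

/-- The discriminant of the quintic `x⁵ + λ₄x³ + λ₆x² + λ₈x + λ₁₀`. -/
def quinticDisc : R4 :=
  3125 * l10 ^ 4 + 256 * l8 ^ 5 - 1600 * l6 * l8 ^ 3 * l10 + 2250 * l6 ^ 2 * l8 * l10 ^ 2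
    - 27 * l6 ^ 4 * l8 ^ 2 + 108 * l6 ^ 5 * l10 + 2000 * l4 * l8 ^ 2 * l10 ^ 2
    - 3750 * l4 * l6 * l10 ^ 3 + 144 * l4 * l6 ^ 2 * l8 ^ 3 - 630 * l4 * l6 ^ 3 * l8 * l10
    - 128 * l4 ^ 2 * l8 ^ 4 + 560 * l4 ^ 2 * l6 * l8 ^ 2 * l10 + 825 * l4 ^ 2 * l6 ^ 2 * l10 ^ 2
    - 900 * l4 ^ 3 * l8 * l10 ^ 2 - 4 * l4 ^ 3 * l6 ^ 2 * l8 ^ 2 + 16 * l4 ^ 3 * l6 ^ 3 * l10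
    + 16 * l4 ^ 4 * l8 ^ 3 - 72 * l4 ^ 4 * l6 * l8 * l10 + 108 * l4 ^ 5 * l10 ^ 2

theorem Δ_eq_C_mul_quinticDisc : Δ = C (256 / 25 : ℂ) * quinticDisc := by
  apply MvPolynomial.funext
  intro x
  simp [Δ, quinticDisc, Matrix.det_succ_row_zero, Fin.sum_univ_succ, T, l4, l6, l8, l10,
    Fin.succAbove]
  ring

theorem ell_one_quinticDisc : ell 1 quinticDisc = 0 := by
  apply MvPolynomial.funext
  intro x
  simp [ell, Fin.sum_univ_four, T, quinticDisc, l4, l6, l8, l10, pderiv_X]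
  ring

theorem ell_two_quinticDisc : ell 2 quinticDisc = 12 * l4 * quinticDisc := by
  apply MvPolynomial.funext
  intro x
  simp [ell, Fin.sum_univ_four, T, quinticDisc, l4, l6, l8, l10, pderiv_X]
  ring

theorem ell_three_quinticDisc : ell 3 quinticDisc = 4 * l6 * quinticDisc := by
  apply MvPolynomial.funext
  intro x
  simp [ell, Fin.sum_univ_four, T, quinticDisc, l4, l6, l8, l10, pderiv_X]
  ring

theorem discriminant_properties :
    Δ.IsWeightedHomogeneous w 40 ∧
    ell 0 Δ = 40 * Δ ∧ ell 1 Δ = 0 ∧ ell 2 Δ = 12 * l4 * Δ ∧ ell 3 Δ = 4 * l6 * Δ := by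
  refine ⟨isWeightedHomogeneous_Δ, ell_zero_Δ, ?_, ?_, ?_⟩ <;>
    rw [Δ_eq_C_mul_quinticDisc, ell_C_mul]
  · rw [ell_one_quinticDisc, mul_zero]
  · rw [ell_two_quinticDisc, mul_left_comm]
  · rw [ell_three_quinticDisc, mul_left_comm]

end
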